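/- arXiv:2209.04836 — 5 statements merged into one kernel-verified Lean document; each statement's English description precedes it below -/
import Mathlib

section
/- Let d ≥ 1, let C, D be d×d real matrices, let α ≥ 0 satisfy |C_{ij}| ≤ α and |D_{ij}| ≤ α for all i, j, and let λ > 5dα with λ > 0. Then for all d×d permutation matrices P, Q, R with Q ≠ R, one has ⟨P(C+λI)Pᵀ, D−λI⟩_F < ⟨Q(C+λI)Rᵀ, D−λI⟩_F; i.e., every 'diagonal' solution (P, P) of the bilinear assignment objective has strictly smaller objective value than every 'off-diagonal' solution (Q, R) with Q ≠ R. -/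
open Matrix

/-- `P` is a `d × d` permutation matrix: `P i j = 1` iff `σ j = i` for some permutation `σ`. -/
def IsPermMatrix {d : ℕ} (P : Matrix (Fin d) (Fin d) ℝ) : Prop :=
  ∃ σ : Equiv.Perm (Fin d), ∀ i j, P i j = if σ j = i then 1 else 0

/-- Frobenius inner product `⟨A, B⟩_F = ∑_{i,j} A i j * B i j`. -/
def frobInner {m n : ℕ} (A B : Matrix (Fin m) (Fin n) ℝ) : ℝ :=
  ∑ i, ∑ j, A i j * B i j

/-! ### Auxiliary lemmas -/

lemma frob_conj {d : ℕ} (σ ρ : Equiv.Perm (Fin d)) (P R A B : Matrix (Fin d) (Fin d) ℝ)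
    (hP : ∀ i j, P i j = if σ j = i then 1 else 0)
    (hR : ∀ i j, R i j = if ρ j = i then 1 else 0) :
    frobInner (P * A * Rᵀ) B = ∑ i, ∑ j, A i j * B (σ i) (ρ j) := by
  unfold frobInner
  have hP' : P = (σ⁻¹ : Equiv.Perm (Fin d)).toPEquiv.toMatrix := by
    ext i j
    rw [hP, PEquiv.toMatrix_apply, Equiv.toPEquiv_apply]
    congr 1
    simp [eq_comm, Equiv.Perm.inv_def, Equiv.eq_symm_apply]
  have hR' : Rᵀ = (ρ : Equiv.Perm (Fin d)).toPEquiv.toMatrix := by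
    ext i j
    rw [transpose_apply, hR, PEquiv.toMatrix_apply, Equiv.toPEquiv_apply]
    simp [eq_comm]
  rw [hP', hR', PEquiv.toMatrix_toPEquiv_mul, PEquiv.mul_toMatrix_toPEquiv]
  have := Fintype.sum_equiv σ (fun i => ∑ j, A i j * B (σ i) (ρ j))
    (fun i => ∑ j, (A.submatrix (σ⁻¹ : Equiv.Perm (Fin d)) id |>.submatrix id ρ.symm) i j * B i j) ?_
  · rw [← this]
  · intro i
    refine Fintype.sum_equiv ρ _ _ ?_
    intro j
    simp

lemma sum_ite_perm {d : ℕ} (τ ρ : Equiv.Perm (Fin d)) (i : Fin d) :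
    ∑ j, (if τ i = ρ j then (1:ℝ) else 0) = 1 := by
  rw [← Equiv.sum_comp ρ.symm (fun j => if τ i = ρ j then (1:ℝ) else 0)]
  simp

lemma decomp {d : ℕ} (C D : Matrix (Fin d) (Fin d) ℝ) (lam : ℝ) (τ ρ : Equiv.Perm (Fin d)) :
    ∑ i, ∑ j, (C i j + lam * (if i = j then 1 else 0)) *
        (D (τ i) (ρ j) - lam * (if τ i = ρ j then 1 else 0))
    = (∑ i, ∑ j, C i j * D (τ i) (ρ j))
      - lam * (∑ i, ∑ j, C i j * (if τ i = ρ j then 1 else 0))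
      + lam * (∑ i, D (τ i) (ρ i))
      - lam ^ 2 * (∑ i, if τ i = ρ i then (1:ℝ) else 0) := by
  have h : ∀ i j : Fin d,
      (C i j + lam * (if i = j then 1 else 0)) *
        (D (τ i) (ρ j) - lam * (if τ i = ρ j then 1 else 0))
      = C i j * D (τ i) (ρ j) - lam * (C i j * (if τ i = ρ j then 1 else 0))
        + lam * (if i = j then D (τ i) (ρ j) else 0)
        - lam ^ 2 * (if i = j then (if τ i = ρ j then (1:ℝ) else 0) else 0) := by
    intro i j; split_ifs <;> ring
  simp only [h, Finset.sum_sub_distrib, Finset.sum_add_distrib, ← Finset.mul_sum,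
    Finset.sum_ite_eq, Finset.mem_univ, if_true]

lemma bS {d : ℕ} (C D : Matrix (Fin d) (Fin d) ℝ) (α : ℝ) (hα : 0 ≤ α)
    (hC : ∀ i j, |C i j| ≤ α) (hD : ∀ i j, |D i j| ≤ α) (τ ρ : Equiv.Perm (Fin d)) :
    |∑ i, ∑ j, C i j * D (τ i) (ρ j)| ≤ (d:ℝ) * (d:ℝ) * (α * α) := by
  calc |∑ i, ∑ j, C i j * D (τ i) (ρ j)|
      ≤ ∑ i, |∑ j, C i j * D (τ i) (ρ j)| := Finset.abs_sum_le_sum_abs _ _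
    _ ≤ ∑ i : Fin d, ∑ j : Fin d, |C i j * D (τ i) (ρ j)| :=
        Finset.sum_le_sum (fun i _ => Finset.abs_sum_le_sum_abs _ _)
    _ ≤ ∑ _i : Fin d, ∑ _j : Fin d, α * α :=
        Finset.sum_le_sum (fun i _ => Finset.sum_le_sum (fun j _ => by
          rw [abs_mul]; exact mul_le_mul (hC i j) (hD _ _) (abs_nonneg _) hα))
    _ = (d:ℝ) * (d:ℝ) * (α * α) := by
        simp [Finset.sum_const, Finset.card_univ]; ring

lemma bT {d : ℕ} (C : Matrix (Fin d) (Fin d) ℝ) (α : ℝ)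
    (hC : ∀ i j, |C i j| ≤ α) (τ ρ : Equiv.Perm (Fin d)) :
    |∑ i, ∑ j, C i j * (if τ i = ρ j then (1:ℝ) else 0)| ≤ (d:ℝ) * α := by
  have habs : ∀ i j, |C i j * (if τ i = ρ j then (1:ℝ) else 0)|
      ≤ α * (if τ i = ρ j then (1:ℝ) else 0) := by
    intro i j
    rw [abs_mul]
    split_ifs with h
    · simpa using hC i j
    · simp
  calc |∑ i, ∑ j, C i j * (if τ i = ρ j then (1:ℝ) else 0)|
      ≤ ∑ i, |∑ j, C i j * (if τ i = ρ j then (1:ℝ) else 0)| := Finset.abs_sum_le_sum_abs _ _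
    _ ≤ ∑ i : Fin d, ∑ j : Fin d, |C i j * (if τ i = ρ j then (1:ℝ) else 0)| :=
        Finset.sum_le_sum (fun i _ => Finset.abs_sum_le_sum_abs _ _)
    _ ≤ ∑ i : Fin d, ∑ j : Fin d, α * (if τ i = ρ j then (1:ℝ) else 0) :=
        Finset.sum_le_sum (fun i _ => Finset.sum_le_sum (fun j _ => habs i j))
    _ = ∑ _i : Fin d, α := by
        refine Finset.sum_congr rfl (fun i _ => ?_)
        rw [← Finset.mul_sum, sum_ite_perm τ ρ i, mul_one]
    _ = (d:ℝ) * α := by simp [Finset.sum_const, Finset.card_univ]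

lemma bU {d : ℕ} (D : Matrix (Fin d) (Fin d) ℝ) (α : ℝ)
    (hD : ∀ i j, |D i j| ≤ α) (τ ρ : Equiv.Perm (Fin d)) :
    |∑ i, D (τ i) (ρ i)| ≤ (d:ℝ) * α := by
  calc |∑ i, D (τ i) (ρ i)| ≤ ∑ i, |D (τ i) (ρ i)| := Finset.abs_sum_le_sum_abs _ _
    _ ≤ ∑ _i : Fin d, α := Finset.sum_le_sum (fun i _ => hD _ _)
    _ = (d:ℝ) * α := by simp [Finset.sum_const, Finset.card_univ]

lemma agree_off_one {d : ℕ} (τ ρ : Equiv.Perm (Fin d)) (i0 : Fin d)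
    (h : ∀ j, j ≠ i0 → τ j = ρ j) : τ = ρ := by
  have hi0 : τ i0 = ρ i0 := by
    by_contra hne
    set j := ρ.symm (τ i0) with hj
    have hρj : ρ j = τ i0 := ρ.apply_symm_apply _
    have hji0 : j ≠ i0 := by
      intro hji0; apply hne; rw [← hρj, hji0]
    have := h j hji0
    have : τ j = τ i0 := by rw [this, hρj]
    exact hji0 (τ.injective this)
  apply Equiv.ext
  intro j
  by_cases hj : j = i0
  · rw [hj]; exact hi0
  · exact h j hj

lemma fix_card {d : ℕ} (τ ρ : Equiv.Perm (Fin d)) (h : τ ≠ ρ) :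
    (Finset.univ.filter (fun i => τ i = ρ i)).card + 2 ≤ d := by
  classical
  set t := Finset.univ.filter (fun i => τ i ≠ ρ i) with ht
  have htcard : 2 ≤ t.card := by
    by_contra hlt
    push_neg at hlt
    interval_cases hc : t.card
    · apply h; apply Equiv.ext; intro i
      have : i ∉ t := by rw [Finset.card_eq_zero.mp hc]; exact Finset.notMem_empty i
      simpa [ht] using this
    · obtain ⟨i0, hi0⟩ := Finset.card_eq_one.mp hc
      apply h
      apply agree_off_one τ ρ i0
      intro j hj
      by_contra hne
      have : j ∈ t := by simp [ht, hne]
      rw [hi0] at this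
      exact hj (Finset.mem_singleton.mp this)
  have hsum : (Finset.univ.filter (fun i => τ i = ρ i)).card + t.card = d := by
    rw [ht, Finset.card_filter_add_card_filter_not (p := fun i => τ i = ρ i)]
    · simp
  omega

lemma key {d : ℕ} (C D : Matrix (Fin d) (Fin d) ℝ) (α : ℝ) (hα : 0 ≤ α)
    (hC : ∀ i j, |C i j| ≤ α) (hD : ∀ i j, |D i j| ≤ α)
    (lam : ℝ) (hlam : 5 * d * α < lam) (hlam' : 0 < lam)
    (σ τ ρ : Equiv.Perm (Fin d)) (hne : τ ≠ ρ) :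
    ∑ i, ∑ j, (C i j + lam * (if i = j then 1 else 0)) *
        (D (σ i) (σ j) - lam * (if σ i = σ j then 1 else 0))
    < ∑ i, ∑ j, (C i j + lam * (if i = j then 1 else 0)) *
        (D (τ i) (ρ j) - lam * (if τ i = ρ j then 1 else 0)) := by
  rw [decomp C D lam σ σ, decomp C D lam τ ρ]
  have hNd : (∑ i, if σ i = σ i then (1:ℝ) else 0) = (d:ℝ) := by simp
  rw [hNd]
  have hN : (∑ i, if τ i = ρ i then (1:ℝ) else 0) ≤ (d:ℝ) - 2 := by
    have h2 := fix_card τ ρ hne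
    rw [Finset.sum_boole]
    have : ((Finset.univ.filter (fun i => τ i = ρ i)).card : ℝ) + 2 ≤ (d:ℝ) := by
      exact_mod_cast h2
    linarith
  have hN2 : lam ^ 2 * (∑ i, if τ i = ρ i then (1:ℝ) else 0) ≤ lam ^ 2 * ((d:ℝ) - 2) :=
    mul_le_mul_of_nonneg_left hN (sq_nonneg lam)
  have bS1 := abs_le.mp (bS C D α hα hC hD σ σ)
  have bS2 := abs_le.mp (bS C D α hα hC hD τ ρ)
  have bT1 := abs_le.mp (bT C α hC σ σ)
  have bT2 := abs_le.mp (bT C α hC τ ρ)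
  have bU1 := abs_le.mp (bU D α hD σ σ)
  have bU2 := abs_le.mp (bU D α hD τ ρ)
  have p1 : -(lam * ((d:ℝ) * α)) ≤ lam * (∑ i, ∑ j, C i j * (if σ i = σ j then (1:ℝ) else 0)) := by
    have h := mul_le_mul_of_nonneg_left bT1.1 hlam'.le
    rw [mul_neg] at h; exact h
  have p2 : lam * (∑ i, ∑ j, C i j * (if τ i = ρ j then (1:ℝ) else 0)) ≤ lam * ((d:ℝ) * α) :=
    mul_le_mul_of_nonneg_left bT2.2 hlam'.le
  have p3 : lam * (∑ i, D (σ i) (σ i)) ≤ lam * ((d:ℝ) * α) :=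
    mul_le_mul_of_nonneg_left bU1.2 hlam'.le
  have p4 : -(lam * ((d:ℝ) * α)) ≤ lam * (∑ i, D (τ i) (ρ i)) := by
    have h := mul_le_mul_of_nonneg_left bU2.1 hlam'.le
    rw [mul_neg] at h; exact h
  have hb : (0:ℝ) ≤ (d:ℝ) * α := mul_nonneg (Nat.cast_nonneg d) hα
  have h1 : 5 * ((d:ℝ) * α) * lam < lam * lam := by
    have : 5 * ((d:ℝ) * α) < lam := by
      have : 5 * (d:ℝ) * α < lam := hlam
      linarith
    exact mul_lt_mul_of_pos_right this hlam'
  have h2 : ((d:ℝ) * α) * (5 * ((d:ℝ) * α)) ≤ ((d:ℝ) * α) * lam := by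
    apply mul_le_mul_of_nonneg_left _ hb
    linarith
  have hx : (0:ℝ) ≤ ((d:ℝ) * α) * lam := mul_nonneg hb hlam'.le
  have hkey : (d:ℝ) * (d:ℝ) * (α * α) + 2 * (lam * ((d:ℝ) * α)) < lam ^ 2 := by
    nlinarith [h1, h2, hx]
  nlinarith [hN2, bS1.1, bS1.2, bS2.1, bS2.2, p1, p2, p3, p4, hkey]

/-- For `λ > 5dα`, every 'diagonal' solution `(P, P)` of the bilinear assignment objective has
strictly smaller objective value than every 'off-diagonal' solution `(Q, R)` with `Q ≠ R`. -/
theorem diagonal_beats_offdiagonal {d : ℕ} (hd : 1 ≤ d)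
    (C D : Matrix (Fin d) (Fin d) ℝ) (α : ℝ) (hα : 0 ≤ α)
    (hC : ∀ i j, |C i j| ≤ α) (hD : ∀ i j, |D i j| ≤ α)
    (lam : ℝ) (hlam : 5 * d * α < lam) (hlam' : 0 < lam) :
    ∀ P Q R : Matrix (Fin d) (Fin d) ℝ,
      IsPermMatrix P → IsPermMatrix Q → IsPermMatrix R → Q ≠ R →
      frobInner (P * (C + lam • (1 : Matrix (Fin d) (Fin d) ℝ)) * Pᵀ)
          (D - lam • (1 : Matrix (Fin d) (Fin d) ℝ))
        < frobInner (Q * (C + lam • (1 : Matrix (Fin d) (Fin d) ℝ)) * Rᵀ)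
            (D - lam • (1 : Matrix (Fin d) (Fin d) ℝ)) := by
  rintro P Q R ⟨σ, hP⟩ ⟨τ, hQ⟩ ⟨ρ, hR⟩ hQR
  have hne : τ ≠ ρ := by
    rintro rfl
    apply hQR
    ext i j
    rw [hQ, hR]
  rw [frob_conj σ σ P P _ _ hP hP, frob_conj τ ρ Q R _ _ hQ hR]
  simp only [Matrix.add_apply, Matrix.sub_apply, Matrix.smul_apply, Matrix.one_apply,
    smul_eq_mul, mul_ite, mul_one, mul_zero]
  have := key C D α hα hC hD lam hlam hlam' σ τ ρ hne
  simp only [mul_ite, mul_one, mul_zero] at this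
  exact this
end

section
/- (Correctness of the QAP reduction underlying Lemma 1.) Let d ≥ 1, let C, D be d×d real matrices, let α ≥ 0 satisfy |C_{ij}| ≤ α and |D_{ij}| ≤ α for all i, j, and let λ > 5dα with λ > 0. Set A = C + λI and B = D − λI. Then a pair (P*, Q*) of d×d permutation matrices minimizes ⟨P A Qᵀ, B⟩_F over all pairs of d×d permutation matrices if and only if P* = Q* and P* minimizes the quadratic assignment objective ⟨P C Pᵀ, D⟩_F over d×d permutation matrices. -/
open Matrix

namespace QAPRedAux

def pm {d : ℕ} (σ : Equiv.Perm (Fin d)) : Matrix (Fin d) (Fin d) ℝ :=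
  Matrix.of fun i j => if σ j = i then 1 else 0

lemma isPerm_pm {d : ℕ} (σ : Equiv.Perm (Fin d)) : IsPermMatrix (pm σ) :=
  ⟨σ, fun _ _ => rfl⟩

lemma pm_inj {d : ℕ} {σ τ : Equiv.Perm (Fin d)} (h : pm σ = pm τ) : σ = τ := by
  apply Equiv.ext
  intro j
  by_contra hne
  have h1 : (pm σ) (σ j) j = (pm τ) (σ j) j := by rw [h]
  have hL : (pm σ) (σ j) j = 1 := if_pos rfl
  have hR : (pm τ) (σ j) j = 0 := if_neg (fun hh => hne hh.symm)
  rw [hL, hR] at h1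
  exact one_ne_zero h1

lemma pm_mul_apply {d : ℕ} (σ : Equiv.Perm (Fin d)) (M : Matrix (Fin d) (Fin d) ℝ) (a b : Fin d) :
    (pm σ * M) a b = M (σ.symm a) b := by
  simp [pm, Matrix.mul_apply, ite_mul, Equiv.apply_eq_iff_eq_symm_apply]

lemma mul_pmT_apply {d : ℕ} (τ : Equiv.Perm (Fin d)) (M : Matrix (Fin d) (Fin d) ℝ) (a b : Fin d) :
    (M * (pm τ)ᵀ) a b = M a (τ.symm b) := by
  simp [pm, Matrix.mul_apply, mul_ite, Equiv.apply_eq_iff_eq_symm_apply]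

lemma frob_pm {d : ℕ} (σ τ : Equiv.Perm (Fin d)) (M N : Matrix (Fin d) (Fin d) ℝ) :
    frobInner (pm σ * M * (pm τ)ᵀ) N = ∑ i, ∑ j, M i j * N (σ i) (τ j) := by
  unfold frobInner
  simp only [mul_pmT_apply, pm_mul_apply]
  rw [← Equiv.sum_comp σ]
  congr 1; ext i
  rw [← Equiv.sum_comp τ]
  simp

section
variable {d : ℕ} (C D : Matrix (Fin d) (Fin d) ℝ) (lam : ℝ)

def Fq (σ τ : Equiv.Perm (Fin d)) : ℝ := ∑ i, ∑ j, C i j * D (σ i) (τ j)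
def Gq (σ τ : Equiv.Perm (Fin d)) : ℝ := ∑ i, D (σ i) (τ i)
def Hq (σ τ : Equiv.Perm (Fin d)) : ℝ := ∑ i, C i (τ.symm (σ i))
def Kq (σ τ : Equiv.Perm (Fin d)) : ℝ := ∑ i, if σ i = τ i then (1:ℝ) else 0

lemma sum_split (σ τ : Equiv.Perm (Fin d)) :
    (∑ i, ∑ j, (C + lam • (1 : Matrix (Fin d) (Fin d) ℝ)) i j *
      (D - lam • (1 : Matrix (Fin d) (Fin d) ℝ)) (σ i) (τ j))
    = Fq C D σ τ + lam * Gq D σ τ - lam * Hq C σ τ - lam^2 * Kq σ τ := by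
  unfold Fq Gq Hq Kq
  simp only [Matrix.add_apply, Matrix.sub_apply, Matrix.smul_apply, Matrix.one_apply,
    smul_eq_mul]
  have h : ∀ i : Fin d, ∑ j, (C i j + lam * if i = j then 1 else 0) *
      (D (σ i) (τ j) - lam * if σ i = τ j then 1 else 0)
      = (∑ j, C i j * D (σ i) (τ j)) + lam * D (σ i) (τ i)
        - lam * C i (τ.symm (σ i)) - lam^2 * (if σ i = τ i then 1 else 0) := by
    intro i
    have hc : ∀ j, (σ i = τ j) ↔ (τ.symm (σ i) = j) := by
      intro j; rw [Equiv.symm_apply_eq]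
    have step : ∀ j : Fin d, (C i j + lam * if i = j then 1 else 0) *
        (D (σ i) (τ j) - lam * if σ i = τ j then 1 else 0)
        = C i j * D (σ i) (τ j) + lam * (if i = j then D (σ i) (τ j) else 0)
          - lam * (if τ.symm (σ i) = j then C i j else 0)
          - lam^2 * (if i = j then (if τ.symm (σ i) = j then 1 else 0) else 0) := by
      intro j
      simp only [hc j]
      rcases eq_or_ne i j with h1 | h1
      · subst h1
        by_cases h2 : τ.symm (σ i) = i <;> simp [h2] <;> ring
      · by_cases h2 : τ.symm (σ i) = j <;> simp [h1, h2] <;> ring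
    rw [Finset.sum_congr rfl fun j _ => step j, Finset.sum_sub_distrib, Finset.sum_sub_distrib,
      Finset.sum_add_distrib, ← Finset.mul_sum, ← Finset.mul_sum, ← Finset.mul_sum,
      Finset.sum_ite_eq, Finset.sum_ite_eq, Finset.sum_ite_eq]
    simp [Equiv.symm_apply_eq]
  rw [Finset.sum_congr rfl fun i _ => h i, Finset.sum_sub_distrib, Finset.sum_sub_distrib,
    Finset.sum_add_distrib, ← Finset.mul_sum, ← Finset.mul_sum, ← Finset.mul_sum]

/-- The reduced objective. -/
def valM (σ τ : Equiv.Perm (Fin d)) : ℝ :=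
  frobInner (pm σ * (C + lam • (1 : Matrix (Fin d) (Fin d) ℝ)) * (pm τ)ᵀ)
    (D - lam • (1 : Matrix (Fin d) (Fin d) ℝ))

lemma valM_eq (σ τ : Equiv.Perm (Fin d)) :
    valM C D lam σ τ = Fq C D σ τ + lam * Gq D σ τ - lam * Hq C σ τ - lam^2 * Kq σ τ := by
  rw [valM, frob_pm, sum_split]

lemma qap_eq (σ : Equiv.Perm (Fin d)) :
    frobInner (pm σ * C * (pm σ)ᵀ) D = Fq C D σ σ := frob_pm σ σ C D

lemma Gq_diag (σ : Equiv.Perm (Fin d)) : Gq D σ σ = ∑ i, D i i := by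
  unfold Gq; exact Equiv.sum_comp σ (fun i => D i i)

lemma Hq_diag (σ : Equiv.Perm (Fin d)) : Hq C σ σ = ∑ i, C i i := by
  unfold Hq; simp

lemma Kq_diag (σ : Equiv.Perm (Fin d)) : Kq σ σ = (d : ℝ) := by
  unfold Kq; simp

lemma valM_diag (σ : Equiv.Perm (Fin d)) :
    valM C D lam σ σ = Fq C D σ σ +
      (lam * (∑ i, D i i) - lam * (∑ i, C i i) - lam^2 * d) := by
  rw [valM_eq, Gq_diag, Hq_diag, Kq_diag]; ring

lemma Kq_le_of_ne {σ τ : Equiv.Perm (Fin d)} (h : σ ≠ τ) : Kq σ τ ≤ (d : ℝ) - 1 := by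
  obtain ⟨i0, hi0⟩ : ∃ i0, σ i0 ≠ τ i0 := by
    by_contra hc
    push_neg at hc
    exact h (Equiv.ext hc)
  have hle : Kq σ τ ≤ ∑ i : Fin d, (if i = i0 then (0:ℝ) else 1) := by
    unfold Kq
    apply Finset.sum_le_sum
    intro i _
    rcases eq_or_ne i i0 with h1 | h1
    · subst h1; simp [hi0]
    · simp [h1]; split <;> norm_num
  have : ∑ i : Fin d, (if i = i0 then (0:ℝ) else 1) = (d : ℝ) - 1 := by
    have : ∑ i : Fin d, (if i = i0 then (0:ℝ) else 1)
        = ∑ i : Fin d, ((1:ℝ) - if i = i0 then 1 else 0) := by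
      apply Finset.sum_congr rfl; intro i _; split <;> norm_num
    rw [this, Finset.sum_sub_distrib]
    simp [Finset.sum_ite_eq']
  linarith [hle, this.le, this.ge]

end

section Bounds
variable {d : ℕ} {C D : Matrix (Fin d) (Fin d) ℝ} {α : ℝ}

lemma abs_sum_le_of {n : ℕ} {c : ℝ} (f : Fin n → ℝ) (h : ∀ i, |f i| ≤ c) :
    |∑ i, f i| ≤ n * c := by
  calc |∑ i, f i| ≤ ∑ i, |f i| := Finset.abs_sum_le_sum_abs _ _
    _ ≤ ∑ _i : Fin n, c := Finset.sum_le_sum (fun i _ => h i)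
    _ = n * c := by simp [Finset.sum_const, nsmul_eq_mul]

lemma Fq_bound (hα : 0 ≤ α) (hC : ∀ i j, |C i j| ≤ α) (hD : ∀ i j, |D i j| ≤ α)
    (σ τ : Equiv.Perm (Fin d)) : |Fq C D σ τ| ≤ d * (d * (α * α)) := by
  apply abs_sum_le_of
  intro i
  apply abs_sum_le_of
  intro j
  rw [abs_mul]
  exact mul_le_mul (hC i j) (hD _ _) (abs_nonneg _) hα

lemma Gq_bound (hD : ∀ i j, |D i j| ≤ α) (σ τ : Equiv.Perm (Fin d)) :
    |Gq D σ τ| ≤ d * α := abs_sum_le_of _ (fun i => hD _ _)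

lemma Hq_bound (hC : ∀ i j, |C i j| ≤ α) (σ τ : Equiv.Perm (Fin d)) :
    |Hq C σ τ| ≤ d * α := abs_sum_le_of _ (fun i => hC _ _)

lemma trD_bound (hD : ∀ i j, |D i j| ≤ α) : |∑ i, D i i| ≤ d * α :=
  abs_sum_le_of _ (fun i => hD i i)

lemma trC_bound (hC : ∀ i j, |C i j| ≤ α) : |∑ i, C i i| ≤ d * α :=
  abs_sum_le_of _ (fun i => hC i i)

/-- Strict comparison: any diagonal pair beats any off-diagonal pair. -/
lemma diag_lt (hα : 0 ≤ α) (hC : ∀ i j, |C i j| ≤ α) (hD : ∀ i j, |D i j| ≤ α)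
    {lam : ℝ} (hlam : 5 * d * α < lam) (hlam' : 0 < lam)
    {σ τ : Equiv.Perm (Fin d)} (hne : σ ≠ τ) (ρ : Equiv.Perm (Fin d)) :
    valM C D lam ρ ρ < valM C D lam σ τ := by
  have ha : (0:ℝ) ≤ d * α := mul_nonneg (Nat.cast_nonneg d) hα
  have h5 : 5 * (d * α) < lam := by linarith [hlam]
  have key : 4 * (d * α) * lam + 2 * (d * α)^2 < lam^2 := by
    nlinarith [mul_le_mul_of_nonneg_left h5.le ha, mul_lt_mul_of_pos_left h5 hlam',
      sq_nonneg (d * α)]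
  have hF1 := Fq_bound hα hC hD ρ ρ
  have hF2 := Fq_bound hα hC hD σ τ
  have hG := Gq_bound hD σ τ
  have hH := Hq_bound hC σ τ
  have htD := trD_bound (α := α) hD
  have htC := trC_bound (α := α) hC
  have hK := Kq_le_of_ne hne
  rw [valM_diag, valM_eq]
  have hl2 : (0:ℝ) < lam^2 := pow_pos hlam' 2
  have t1 : lam * (-(d * α)) ≤ lam * Gq D σ τ :=
    mul_le_mul_of_nonneg_left (abs_le.mp hG).1 hlam'.le
  have t2 : lam * Hq C σ τ ≤ lam * (d * α) :=
    mul_le_mul_of_nonneg_left (abs_le.mp hH).2 hlam'.le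
  have t3 : lam^2 * Kq σ τ ≤ lam^2 * ((d:ℝ) - 1) :=
    mul_le_mul_of_nonneg_left hK hl2.le
  have t4 : lam * (∑ i, D i i) ≤ lam * (d * α) :=
    mul_le_mul_of_nonneg_left (abs_le.mp htD).2 hlam'.le
  have t5 : lam * (-(d * α)) ≤ lam * (∑ i, C i i) :=
    mul_le_mul_of_nonneg_left (abs_le.mp htC).1 hlam'.le
  have hF1' := (abs_le.mp hF1).2
  have hF2' := (abs_le.mp hF2).1
  nlinarith [key, t1, t2, t3, t4, t5, hF1', hF2']

end Bounds

end QAPRedAux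

open QAPRedAux in
/-- Correctness of the QAP reduction: with `A = C + λI`, `B = D − λI` and `λ > 5dα`, a pair
`(P*, Q*)` of permutation matrices minimizes `⟨P A Qᵀ, B⟩_F` over all pairs of permutation
matrices iff `P* = Q*` and `P*` minimizes the QAP objective `⟨P C Pᵀ, D⟩_F`. -/
theorem qap_reduction_correct {d : ℕ} (hd : 1 ≤ d)
    (C D : Matrix (Fin d) (Fin d) ℝ) (α : ℝ) (hα : 0 ≤ α)
    (hC : ∀ i j, |C i j| ≤ α) (hD : ∀ i j, |D i j| ≤ α)
    (lam : ℝ) (hlam : 5 * d * α < lam) (hlam' : 0 < lam)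
    (Pstar Qstar : Matrix (Fin d) (Fin d) ℝ)
    (hPstar : IsPermMatrix Pstar) (hQstar : IsPermMatrix Qstar) :
    (∀ P Q : Matrix (Fin d) (Fin d) ℝ, IsPermMatrix P → IsPermMatrix Q →
        frobInner (Pstar * (C + lam • (1 : Matrix (Fin d) (Fin d) ℝ)) * Qstarᵀ)
            (D - lam • (1 : Matrix (Fin d) (Fin d) ℝ))
          ≤ frobInner (P * (C + lam • (1 : Matrix (Fin d) (Fin d) ℝ)) * Qᵀ)
              (D - lam • (1 : Matrix (Fin d) (Fin d) ℝ)))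
      ↔ (Pstar = Qstar ∧
          ∀ P : Matrix (Fin d) (Fin d) ℝ, IsPermMatrix P →
            frobInner (Pstar * C * Pstarᵀ) D ≤ frobInner (P * C * Pᵀ) D) := by
  obtain ⟨σs, hσs⟩ := hPstar
  obtain ⟨τs, hτs⟩ := hQstar
  have hP : Pstar = pm σs := by ext i j; simp [pm, hσs]
  have hQ : Qstar = pm τs := by ext i j; simp [pm, hτs]
  subst hP hQ
  constructor
  · intro hmin
    have hστ : σs = τs := by
      by_contra hne
      have h1 := hmin (pm τs) (pm τs) (isPerm_pm τs) (isPerm_pm τs)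
      have h2 := diag_lt hα hC hD hlam hlam' hne τs
      rw [valM, valM] at h2
      linarith
    subst hστ
    refine ⟨rfl, ?_⟩
    intro P hP
    obtain ⟨ρ, hρ⟩ := hP
    have hPe : P = pm ρ := by ext i j; simp [pm, hρ]
    subst hPe
    have h1 := hmin (pm ρ) (pm ρ) (isPerm_pm ρ) (isPerm_pm ρ)
    have h2 : valM C D lam σs σs ≤ valM C D lam ρ ρ := h1
    rw [valM_diag, valM_diag] at h2
    rw [qap_eq, qap_eq]
    linarith
  · rintro ⟨hPQ, hqap⟩
    have hστ : σs = τs := pm_inj hPQ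
    subst hστ
    intro P Q hP hQ
    obtain ⟨ρ, hρ⟩ := hP
    obtain ⟨π, hπ⟩ := hQ
    have hPe : P = pm ρ := by ext i j; simp [pm, hρ]
    have hQe : Q = pm π := by ext i j; simp [pm, hπ]
    subst hPe hQe
    rcases eq_or_ne ρ π with h1 | h1
    · subst h1
      have h2 := hqap (pm ρ) (isPerm_pm ρ)
      rw [qap_eq, qap_eq] at h2
      show valM C D lam σs σs ≤ valM C D lam ρ ρ
      rw [valM_diag, valM_diag]
      linarith
    · have h2 := diag_lt hα hC hD hlam hlam' h1 σs
      rw [valM, valM] at h2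
      exact h2.le
end

section
/- Let σ denote the entrywise ReLU. With weights Θ_A = (W₁^A, b₁^A, W₂^A, b₂^A, W₃^A) = ([[−1,0],[0,−1]], (1,0), [[−1,0],[0,1]], (1,0), [−1,−1]) and Θ_B = ([[1,0],[0,1]], (0,1), [[1,0],[0,−1]], (0,1), [−1,−1]), the naive midpoint network with weights (Θ_A + Θ_B)/2 (averaging each weight matrix and bias) computes the constant function: for all x ∈ ℝ², [−1,−1] · σ( ((W₂^A+W₂^B)/2) · σ( ((W₁^A+W₁^B)/2) · x + (b₁^A+b₁^B)/2 ) + (b₂^A+b₂^B)/2 ) = −1. In particular the midpoint network misclassifies every positively labeled point (those with x₁ < 0 and x₂ > 0), since −1 < 0. -/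
open Matrix

/-- ReLU. -/
def relu (t : ℝ) : ℝ := max t 0

/-- Two-hidden-layer network `x ↦ W₃ ⬝ σ(W₂ σ(W₁ x + b₁) + b₂)` with entrywise ReLU. -/
def net2 (W₁ : Matrix (Fin 2) (Fin 2) ℝ) (b₁ : Fin 2 → ℝ)
    (W₂ : Matrix (Fin 2) (Fin 2) ℝ) (b₂ : Fin 2 → ℝ)
    (W₃ : Fin 2 → ℝ) (x : Fin 2 → ℝ) : ℝ :=
  W₃ ⬝ᵥ fun i => relu ((W₂.mulVec (fun j => relu ((W₁.mulVec x + b₁) j)) + b₂) i)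

/-- The naive midpoint of the counterexample weights `Θ_A` and `Θ_B` computes the constant
function `−1`; in particular it misclassifies every positively labeled point
(`x₁ < 0` and `x₂ > 0`), since `−1 < 0`. -/
theorem counterexample_naive_midpoint_constant :
    (∀ x : Fin 2 → ℝ,
      net2 (((1 : ℝ) / 2) • (!![-1, 0; 0, -1] + !![1, 0; 0, 1]))
          (((1 : ℝ) / 2) • (![1, 0] + ![0, 1]))
          (((1 : ℝ) / 2) • (!![-1, 0; 0, 1] + !![1, 0; 0, -1]))
          (((1 : ℝ) / 2) • (![1, 0] + ![0, 1]))
          ![-1, -1] x = -1) ∧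
    (∀ x : Fin 2 → ℝ, x 0 < 0 → 0 < x 1 →
      ¬ (0 ≤ net2 (((1 : ℝ) / 2) • (!![-1, 0; 0, -1] + !![1, 0; 0, 1]))
          (((1 : ℝ) / 2) • (![1, 0] + ![0, 1]))
          (((1 : ℝ) / 2) • (!![-1, 0; 0, 1] + !![1, 0; 0, -1]))
          (((1 : ℝ) / 2) • (![1, 0] + ![0, 1]))
          ![-1, -1] x)) := by
  have h : ∀ x : Fin 2 → ℝ,
      net2 (((1 : ℝ) / 2) • (!![-1, 0; 0, -1] + !![1, 0; 0, 1]))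
          (((1 : ℝ) / 2) • (![1, 0] + ![0, 1]))
          (((1 : ℝ) / 2) • (!![-1, 0; 0, 1] + !![1, 0; 0, -1]))
          (((1 : ℝ) / 2) • (![1, 0] + ![0, 1]))
          ![-1, -1] x = -1 := by
    intro x
    simp [net2, relu, mulVec, dotProduct, Fin.sum_univ_two, Matrix.smul_apply]
    norm_num
  refine ⟨h, fun x _ _ hle => ?_⟩
  rw [h x] at hle
  linarith
end

section
/- (Counterexample to universal linear mode connectivity.) Let σ denote the entrywise ReLU, and let Θ_A = ([[−1,0],[0,−1]], (1,0), [[−1,0],[0,1]], (1,0), [−1,−1]) and Θ_B = ([[1,0],[0,1]], (0,1), [[1,0],[0,−1]], (0,1), [−1,−1]) be the counterexample weights. For 2×2 permutation matrices P₁, P₂, let π(Θ_B) denote the functionally equivalent reparameterization (P₁W₁^B, P₁b₁^B, P₂W₂^BP₁ᵀ, P₂b₂^B, W₃^BP₂ᵀ). Then for every choice of P₁, P₂ ∈ {I, swap}, the midpoint network with weights (Θ_A + π(Θ_B))/2 misclassifies some point: there exists x ∈ [−1,1]² with x₁ ≠ 0 and x₂ ≠ 0 such that either f(x) ≥ 0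 and y(x) = 0, or f(x) < 0 and y(x) = 1, where f is the network computed by the averaged weights and y(x) = 1_{x₁<0 and x₂>0}. -/
open Matrix

/-- Counterexample to universal linear mode connectivity: for every choice of the
2×2 permutation matrices `P₁, P₂ ∈ {I, swap}`, the midpoint of `Θ_A` and the permuted
reparameterization `π(Θ_B) = (P₁W₁ᴮ, P₁b₁ᴮ, P₂W₂ᴮP₁ᵀ, P₂b₂ᴮ, W₃ᴮP₂ᵀ)` misclassifies some
point of `[−1,1]²` away from the axes, relative to the labels `y(x) = 1_{x₁<0 ∧ x₂>0}`. -/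
theorem counterexample_no_lmc (P₁ P₂ : Matrix (Fin 2) (Fin 2) ℝ)
    (h₁ : P₁ = 1 ∨ P₁ = !![0, 1; 1, 0]) (h₂ : P₂ = 1 ∨ P₂ = !![0, 1; 1, 0]) :
    ∃ x : Fin 2 → ℝ, (-1 ≤ x 0 ∧ x 0 ≤ 1) ∧ (-1 ≤ x 1 ∧ x 1 ≤ 1) ∧
      x 0 ≠ 0 ∧ x 1 ≠ 0 ∧
      (let f := net2 (((1 : ℝ) / 2) • (!![-1, 0; 0, -1] + P₁ * !![1, 0; 0, 1]))
          (((1 : ℝ) / 2) • (![1, 0] + P₁.mulVec ![0, 1]))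
          (((1 : ℝ) / 2) • (!![-1, 0; 0, 1] + P₂ * !![1, 0; 0, -1] * P₁ᵀ))
          (((1 : ℝ) / 2) • (![1, 0] + P₂.mulVec ![0, 1]))
          (((1 : ℝ) / 2) • (![-1, -1] + Matrix.vecMul ![-1, -1] P₂ᵀ));
        (0 ≤ f x ∧ ¬ (x 0 < 0 ∧ 0 < x 1)) ∨ (f x < 0 ∧ (x 0 < 0 ∧ 0 < x 1))) := by
  rcases h₁ with rfl | rfl <;> rcases h₂ with rfl | rfl
  · refine ⟨![-1, 1/4], by norm_num, by norm_num, by norm_num, by norm_num, Or.inr ⟨?_, by norm_num⟩⟩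
    simp only [net2, relu, Matrix.mulVec, dotProduct, Matrix.one_mul, Matrix.transpose_one,
      Matrix.mul_one, Matrix.one_mulVec, Matrix.vecMul_one, Fin.sum_univ_two,
      Matrix.cons_val', Matrix.cons_val_zero, Matrix.cons_val_one, Matrix.head_cons,
      Matrix.head_fin_const, Matrix.empty_val', Matrix.cons_val_fin_one, Pi.add_apply,
      Pi.smul_apply, Matrix.add_apply, smul_eq_mul, Matrix.of_apply]
    norm_num [max_def, Matrix.vecHead, Matrix.vecTail, Matrix.transpose]
  · refine ⟨![-1, 1/4], by norm_num, by norm_num, by norm_num, by norm_num, Or.inr ⟨?_, by norm_num⟩⟩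
    simp only [net2, relu, Matrix.mulVec, dotProduct, Matrix.one_mul, Matrix.transpose_one,
      Matrix.mul_one, Matrix.one_mulVec, Matrix.vecMul_one, Fin.sum_univ_two, Matrix.vecMul,
      Matrix.mul_apply, Matrix.transpose_apply,
      Matrix.cons_val', Matrix.cons_val_zero, Matrix.cons_val_one, Matrix.head_cons,
      Matrix.head_fin_const, Matrix.empty_val', Matrix.cons_val_fin_one, Pi.add_apply,
      Pi.smul_apply, Matrix.add_apply, smul_eq_mul, Matrix.of_apply]
    norm_num [max_def, Matrix.vecHead, Matrix.vecTail, Matrix.transpose]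
  · refine ⟨![-1, -1], by norm_num, by norm_num, by norm_num, by norm_num, Or.inl ⟨?_, by norm_num⟩⟩
    simp only [net2, relu, Matrix.mulVec, dotProduct, Matrix.one_mul, Matrix.transpose_one,
      Matrix.mul_one, Matrix.one_mulVec, Matrix.vecMul_one, Fin.sum_univ_two, Matrix.vecMul,
      Matrix.mul_apply, Matrix.transpose_apply,
      Matrix.cons_val', Matrix.cons_val_zero, Matrix.cons_val_one, Matrix.head_cons,
      Matrix.head_fin_const, Matrix.empty_val', Matrix.cons_val_fin_one, Pi.add_apply,
      Pi.smul_apply, Matrix.add_apply, smul_eq_mul, Matrix.of_apply]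
    norm_num [max_def, Matrix.vecHead, Matrix.vecTail, Matrix.transpose]
  · refine ⟨![-1, -1], by norm_num, by norm_num, by norm_num, by norm_num, Or.inl ⟨?_, by norm_num⟩⟩
    simp only [net2, relu, Matrix.mulVec, dotProduct, Matrix.one_mul, Matrix.transpose_one,
      Matrix.mul_one, Matrix.one_mulVec, Matrix.vecMul_one, Fin.sum_univ_two, Matrix.vecMul,
      Matrix.mul_apply, Matrix.transpose_apply,
      Matrix.cons_val', Matrix.cons_val_zero, Matrix.cons_val_one, Matrix.head_cons,
      Matrix.head_fin_const, Matrix.empty_val', Matrix.cons_val_fin_one, Pi.add_apply,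
      Pi.smul_apply, Matrix.add_apply, smul_eq_mul, Matrix.of_apply]
    norm_num [max_def, Matrix.vecHead, Matrix.vecTail, Matrix.transpose]
end

section
/- (Failure of greedy uni-directional matching on deep linear networks.) Fix ε > 0 and define linear networks f_{Θ_A}(x) = [1,0]·[[1,0],[0,ε]]·[1, 1+ε]ᵀ·x and f_{Θ_B}(x) = [0,1]·[[0,0],[0,1]]·[1, 1+ε]ᵀ·x. Then: (i) f_{Θ_A}(x) = x and f_{Θ_B}(x) = (1+ε)x for all x ∈ ℝ; (ii) averaging the unpermuted weights (greedy uni-directional matching, P₁ = P₂ = I) gives the midpoint network x ↦ [1/2,1/2]·[[1/2,0],[0,(1+ε)/2]]·[1, 1+ε]ᵀ·x = (1/2 + ε/2 + ε²/4)x; (iii) applying the swap permutation S = [[0,1],[1,0]] at both hidden layers of Θ_B (the weight-matching solution), i.e., replacing the three matrices of Θ_B by [0,1]·Sᵀ = [1,0], S·[[0,0],[0,1]]·Sᵀ = [[1,0],[0,0]], and S·[1, 1+ε]ᵀ = [1+ε, 1]ᵀ, and then averaging with Θ_A, gives the midpoint network x ↦ [1,0]·[[1,0],[0,ε/2]]·[1+ε/2,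 1+ε/2]ᵀ·x = (1 + ε/2)x. In particular the weight-matched midpoint reflects both input models (which compute x and (1+ε)x) while the greedy midpoint does not. -/
open Matrix

/-- Three-layer linear network `x ↦ W₃ W₂ W₁ x` with `W₁ ∈ ℝ^{2×1}` (given as a vector),
`W₂ ∈ ℝ^{2×2}`, `W₃ ∈ ℝ^{1×2}` (given as a vector), acting on scalars `x : ℝ`. -/
def linNet (W₃ : Fin 2 → ℝ) (W₂ : Matrix (Fin 2) (Fin 2) ℝ) (W₁ : Fin 2 → ℝ) (x : ℝ) : ℝ :=
  W₃ ⬝ᵥ W₂.mulVec (fun i => W₁ i * x)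

/-- Failure of greedy uni-directional matching on deep linear networks:
(i) `Θ_A` computes `x` and `Θ_B` computes `(1+ε)x`;
(ii) the naive (greedy, unpermuted) midpoint computes `(1/2 + ε/2 + ε²/4)x`;
(iii) the weight-matched midpoint (swap permutation applied at both hidden layers of `Θ_B`)
computes `(1 + ε/2)x`. -/
theorem greedy_matching_failure (ε : ℝ) (hε : 0 < ε) :
    (∀ x : ℝ, linNet ![1, 0] !![1, 0; 0, ε] ![1, 1 + ε] x = x) ∧
    (∀ x : ℝ, linNet ![0, 1] !![0, 0; 0, 1] ![1, 1 + ε] x = (1 + ε) * x) ∧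
    (∀ x : ℝ,
      linNet (((1 : ℝ) / 2) • (![1, 0] + ![0, 1]))
          (((1 : ℝ) / 2) • (!![1, 0; 0, ε] + !![0, 0; 0, 1]))
          (((1 : ℝ) / 2) • (![1, 1 + ε] + ![1, 1 + ε])) x
        = (1 / 2 + ε / 2 + ε ^ 2 / 4) * x) ∧
    (∀ x : ℝ,
      linNet (((1 : ℝ) / 2) • (![1, 0] + Matrix.vecMul ![0, 1] (!![0, 1; 1, 0])ᵀ))
          (((1 : ℝ) / 2) • (!![1, 0; 0, ε] + !![0, 1; 1, 0] * !![0, 0; 0, 1] * (!![0, 1; 1, 0])ᵀ))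
          (((1 : ℝ) / 2) • (![1, 1 + ε] + (!![0, 1; 1, 0]).mulVec ![1, 1 + ε])) x
        = (1 + ε / 2) * x) := by
  refine ⟨fun x => ?_, fun x => ?_, fun x => ?_, fun x => ?_⟩ <;>
    simp [linNet, mulVec, vecMul, dotProduct, Matrix.mul_apply, Matrix.transpose_apply,
      Fin.sum_univ_two, Matrix.vecHead, Matrix.vecTail] <;> ring
end
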